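/- arXiv:2002.05009 — 3 statements merged into one kernel-verified Lean document; each statement's English description precedes it below -/
import Mathlib

section
/- Let a₁ be a bounded sesquilinear form on V × W satisfying the inf-sup condition with constant c > 0 and nondegenerate in the second component, and let d be a bounded sesquilinear form on H × W. Assume the embedding j : V → H is a compact operator and that the following injectivity condition holds: every u ∈ V with a₁(u,w) + d(ju,w) = 0 for all w ∈ W satisfies u = 0. Then for every φ ∈ W* there exists exactly one u ∈ V with a₁(u,w) + d(ju,w) = φ(w) for all w ∈ W. -/
/-!
By the inf-sup condition, `a₁ : V → W*` is injective with closed range. A functional on `W*`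
vanishing on that range is, by reflexivity, evaluation at some `w` with `a₁(·, w) = 0`, so it is
zero, and by Hahn–Banach `a₁` is an isomorphism. Then `a₁ + d ∘ j = a₁ ∘ (1 + a₁⁻¹ ∘ d ∘ j)` with
`a₁⁻¹ ∘ d ∘ j` compact, and the Fredholm alternative turns injectivity into bijectivity.
-/

theorem IsCompactOperator.bijective_one_add_of_injective {𝕜 X : Type*} [NontriviallyNormedField 𝕜]
    [NormedAddCommGroup X] [NormedSpace 𝕜 X] [CompleteSpace X] {T : X →L[𝕜] X}
    (hT : IsCompactOperator T) (hinj : Function.Injective ⇑(1 + T : X →L[𝕜] X)) :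
    Function.Bijective ⇑(1 + T : X →L[𝕜] X) := by
  have hμ : (-1 : 𝕜) ≠ 0 := neg_ne_zero.2 one_ne_zero
  have hnot : ¬ Module.End.HasEigenvalue (T : Module.End 𝕜 X) (-1) := fun h => by
    obtain ⟨x, hx⟩ := h.exists_hasEigenvector
    refine hx.2 (hinj ?_)
    have := hx.apply_eq_smul
    simp only [ContinuousLinearMap.coe_coe] at this
    simp [this]
  have hunit := (hT.hasEigenvalue_or_mem_resolventSet hμ).resolve_left hnot
  rw [spectrum.mem_resolventSet_iff, show algebraMap 𝕜 (X →L[𝕜] X) (-1) - T = -(1 + T) by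
    rw [map_neg, map_one]; abel, IsUnit.neg_iff, ContinuousLinearMap.isUnit_iff_bijective] at hunit
  exact hunit

theorem ContinuousLinearEquiv.bijective_add_of_isCompactOperator {𝕜 X Y : Type*}
    [NontriviallyNormedField 𝕜] [NormedAddCommGroup X] [NormedSpace 𝕜 X] [CompleteSpace X]
    [NormedAddCommGroup Y] [NormedSpace 𝕜 Y] (A : X ≃L[𝕜] Y) {K : X →L[𝕜] Y}
    (hK : IsCompactOperator K) (hinj : Function.Injective ⇑((A : X →L[𝕜] Y) + K)) :
    Function.Bijective ⇑((A : X →L[𝕜] Y) + K) := by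
  set T : X →L[𝕜] X := (A.symm : Y →L[𝕜] X).comp K
  have hfactor : (A : X →L[𝕜] Y) + K = (A : X →L[𝕜] Y).comp (1 + T) := by
    ext x; simp [T]
  rw [hfactor, ContinuousLinearMap.coe_comp] at hinj ⊢
  exact A.bijective.comp <|
    IsCompactOperator.bijective_one_add_of_injective (hK.clm_comp (A.symm : Y →L[𝕜] X))
      hinj.of_comp

/-- Elements of `W →L⋆[𝕜] 𝕜` are antilinear, so composing with conjugation identifies the dual
of this space with the bidual of `W`. -/
theorem exists_forall_eq_apply_of_surjective_inclusionInDoubleDual {𝕜 W : Type*} [RCLike 𝕜]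
    [NormedAddCommGroup W] [NormedSpace 𝕜 W]
    (hrefl : Function.Surjective ⇑(NormedSpace.inclusionInDoubleDual 𝕜 W))
    (Φ : StrongDual 𝕜 (W →L⋆[𝕜] 𝕜)) : ∃ w : W, ∀ ψ : W →L⋆[𝕜] 𝕜, Φ ψ = ψ w := by
  let conjL : 𝕜 →L⋆[𝕜] 𝕜 := (starL 𝕜 : 𝕜 ≃L⋆[𝕜] 𝕜)
  let conj : StrongDual 𝕜 W →L⋆[𝕜] (W →L⋆[𝕜] 𝕜) :=
    ContinuousLinearMap.compSL W 𝕜 𝕜 (RingHom.id 𝕜) (starRingEnd 𝕜) conjL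
  obtain ⟨w, hw⟩ := hrefl (conjL.comp (Φ.comp conj))
  refine ⟨w, fun ψ => ?_⟩
  have hψ : conj (conjL.comp ψ) = ψ := by ext; simp [conj, conjL]
  have := congrArg (fun F => F (conjL.comp ψ)) hw
  simpa [hψ, conjL] using congrArg (starRingEnd 𝕜) this.symm

theorem Submodule.eq_top_of_isClosed_of_forall_dual_eq_zero {𝕜 E : Type*} [RCLike 𝕜]
    [NormedAddCommGroup E] [NormedSpace 𝕜 E] {F : Submodule 𝕜 E} (hF : IsClosed (F : Set E))
    (h : ∀ f : StrongDual 𝕜 E, (∀ x ∈ F, f x = 0) → f = 0) : F = ⊤ := by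
  refine F.eq_top_iff'.2 fun x => by_contra fun hx => ?_
  have hπx : ‖F.mkQL x‖ ≠ 0 := norm_ne_zero_iff.2 <| by
    simpa [Submodule.mkQL_apply, Submodule.Quotient.mk_eq_zero] using hx
  obtain ⟨g, -, hg⟩ := exists_dual_vector 𝕜 (F.mkQL x) hπx
  have hzero : g.comp F.mkQL = 0 := h _ fun y hy => by
    simp [Submodule.mkQL_apply, (Submodule.Quotient.mk_eq_zero F).2 hy]
  have := congrArg (fun f => f x) hzero
  simp only [ContinuousLinearMap.comp_apply, hg, zero_apply] at this
  exact hπx (by exact_mod_cast this)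

theorem ContinuousLinearMap.bijective_of_inf_sup {𝕜 V W : Type*} [RCLike 𝕜]
    [NormedAddCommGroup V] [NormedSpace 𝕜 V] [CompleteSpace V]
    [NormedAddCommGroup W] [NormedSpace 𝕜 W]
    (hrefl : Function.Surjective ⇑(NormedSpace.inclusionInDoubleDual 𝕜 W))
    (a : V →L[𝕜] W →L⋆[𝕜] 𝕜) {c : ℝ} (hc : 0 < c) (hinfsup : ∀ v : V, c * ‖v‖ ≤ ‖a v‖)
    (hnondeg : ∀ w : W, (∀ v : V, a v w = 0) → w = 0) :
    Function.Bijective ⇑a := by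
  have hanti : AntilipschitzWith (c⁻¹).toNNReal a := a.antilipschitz_of_bound fun v => by
    rw [Real.coe_toNNReal _ (by positivity), inv_mul_eq_div, le_div_iff₀ hc]
    linarith [hinfsup v]
  refine ⟨hanti.injective, LinearMap.range_eq_top.1 ?_⟩
  refine Submodule.eq_top_of_isClosed_of_forall_dual_eq_zero ?_ fun Φ hΦ => ?_
  · rw [LinearMap.coe_range]
    exact hanti.isClosed_range a.uniformContinuous
  · obtain ⟨w, hw⟩ := exists_forall_eq_apply_of_surjective_inclusionInDoubleDual hrefl Φ
    have hw0 : w = 0 := hnondeg w fun v => (hw (a v)).symm.trans (hΦ _ ⟨v, rfl⟩)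
    ext ψ
    simp [hw ψ, hw0]

theorem strongly_well_posed_of_compact_and_injective_general
    {𝕂 V W H : Type*} [RCLike 𝕂]
    [NormedAddCommGroup V] [NormedSpace 𝕂 V] [CompleteSpace V]
    [NormedAddCommGroup W] [NormedSpace 𝕂 W]
    [NormedAddCommGroup H] [NormedSpace 𝕂 H]
    (hrefl : Function.Surjective ⇑(NormedSpace.inclusionInDoubleDual 𝕂 W))
    (j : V →L[𝕂] H)
    (hjcompact : IsCompactOperator ⇑j)
    (a₁ : V →L[𝕂] (W →SL[starRingEnd 𝕂] 𝕂))
    (c : ℝ) (hc : 0 < c)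
    (hinfsup : ∀ v : V, c * ‖v‖ ≤ ‖a₁ v‖)
    (hnondeg : ∀ w : W, (∀ v : V, a₁ v w = 0) → w = 0)
    (d : H →L[𝕂] (W →SL[starRingEnd 𝕂] 𝕂))
    (hinj : ∀ u : V, (∀ w : W, a₁ u w + d (j u) w = 0) → u = 0) :
    ∀ φ : W →SL[starRingEnd 𝕂] 𝕂, ∃! u : V, ∀ w : W, a₁ u w + d (j u) w = φ w := by
  have ha₁ := a₁.bijective_of_inf_sup hrefl hc hinfsup hnondeg
  let A := ContinuousLinearEquiv.ofBijective a₁ (LinearMap.ker_eq_bot.2 ha₁.1)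
    (LinearMap.range_eq_top.2 ha₁.2)
  have hinj_sum : Function.Injective ⇑(a₁ + d.comp j) :=
    (injective_iff_map_eq_zero _).2 fun u hu =>
      hinj u fun w => by simpa using congrArg (fun ψ => ψ w) hu
  have hbij : Function.Bijective ⇑(a₁ + d.comp j) :=
    A.bijective_add_of_isCompactOperator (hjcompact.clm_comp d) hinj_sum
  intro φ
  obtain ⟨u, hu, huniq⟩ := hbij.existsUnique φ
  refine ⟨u, fun w => ?_, fun v hv => huniq v ?_⟩
  · simpa using congrArg (fun ψ => ψ w) hu
  · ext w; simpa using hv w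

/-- Proposition 3.5 c) (Fredholm alternative): if the embedding `j : V → H` is compact
and the homogeneous problem `a₁(u,w) + d(ju,w) = 0` for all `w` only has the trivial
solution, then for every `φ ∈ W*` the variational problem
`a₁(u,w) + d(ju,w) = φ(w)` for all `w ∈ W` has exactly one solution `u ∈ V`. -/
theorem strongly_well_posed_of_compact_and_injective
    {𝕂 V W H : Type*} [RCLike 𝕂]
    [NormedAddCommGroup V] [NormedSpace 𝕂 V] [CompleteSpace V]
    [NormedAddCommGroup W] [NormedSpace 𝕂 W] [CompleteSpace W] [Nontrivial W]
    [NormedAddCommGroup H] [NormedSpace 𝕂 H] [CompleteSpace H]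
    (hrefl : Function.Surjective ⇑(NormedSpace.inclusionInDoubleDual 𝕂 W))
    (j : V →L[𝕂] H) (hj : Function.Injective ⇑j)
    (hjcompact : IsCompactOperator ⇑j)
    (a₁ : V →L[𝕂] (W →SL[starRingEnd 𝕂] 𝕂))
    (c : ℝ) (hc : 0 < c)
    (hinfsup : ∀ v : V, c * ‖v‖ ≤ ‖a₁ v‖)
    (hnondeg : ∀ w : W, (∀ v : V, a₁ v w = 0) → w = 0)
    (d : H →L[𝕂] (W →SL[starRingEnd 𝕂] 𝕂))
    (hinj : ∀ u : V, (∀ w : W, a₁ u w + d (j u) w = 0) → u = 0) :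
    ∀ φ : W →SL[starRingEnd 𝕂] 𝕂, ∃! u : V, ∀ w : W, a₁ u w + d (j u) w = φ w :=
  strongly_well_posed_of_compact_and_injective_general hrefl j hjcompact a₁ c hc hinfsup hnondeg d
    hinj
end

section
/- Let E be a topological space, X a Banach space over 𝕂, U ⊆ X nonempty and open, 𝔞₁ : E → S(V × W, 𝕂) and 𝔠 : E × U → S(H × W, 𝕂) continuous, each 𝔞₁(t) satisfying the inf-sup condition with constant c(t) > 0 and nondegenerate in the second component, and assume the embedding j : V → H is a compact operator. Let Ũ ⊆ U be nonempty and suppose that for all (t,m) ∈ E × Ũ and u ∈ V: if 𝔞₁(t)(u,w) + 𝔠(t,m)(ju,w) = 0 for all w ∈ W, then u = 0. Then: (a) there exists a set 𝒰 ⊆ E × U, open in E × X, containing E × Ũ, such that I_V + C^V_{t,m} is invertible in L(V) for all (t,m) ∈ 𝒰 and (t,m) ↦ (I_V + C^V_{t,m})⁻¹ is continuous on 𝒰; moreover for each t ∈ E there is a set 𝒰_t, open in X, with Ũ ⊆ 𝒰_t ⊆ U, such that I_V + C^V_{t,m} is invertible for all m ∈ 𝒰_t. (b) For every φ ∈ W*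 and (t,m) ∈ 𝒰 there exists exactly one u ∈ V with 𝔞₁(t)(u,w) + 𝔠(t,m)(ju,w) = φ(w) for all w ∈ W; this u depends continuously on (t,m,φ) and satisfies ‖u‖_V ≤ (1/c(t))·‖(I_V + C^V_{t,m})⁻¹‖_{L(V)}·‖φ‖_{W*}. -/
/-!
By the inf-sup condition, nondegeneracy and reflexivity (Banach–Nečas–Babuška), every `𝔞₁ t` is
an isomorphism `V ≃ W*` whose inverse has norm at most `1 / c t` and depends continuously on `t`.
On `E × U` this identifies `C^V_{t,m}` with `(𝔞₁ t)⁻¹ ∘ 𝔠 (t, m) ∘ j`, a compact operator, and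
factors the problem as `𝔞₁ t + 𝔠 (t, m) ∘ j = 𝔞₁ t ∘ (I + C^V_{t,m})`. The Fredholm alternative
turns the injectivity hypothesis on `E × Ũ` into invertibility of `I + C^V_{t,m}`; invertibility
is an open condition and inversion is continuous, which produces `𝒰`, and on `𝒰` the solution is
`u = (I + C^V_{t,m})⁻¹ (𝔞₁ t)⁻¹ φ`.
-/

open ContinuousLinearMap Set

theorem Submodule.exists_strongDual_eq_zero_ne_zero_of_notMem {𝕂 Y : Type*} [RCLike 𝕂]
    [NormedAddCommGroup Y] [NormedSpace 𝕂 Y] (p : Submodule 𝕂 Y) [IsClosed (p : Set Y)]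
    {x : Y} (hx : x ∉ p) : ∃ f : StrongDual 𝕂 Y, (∀ y ∈ p, f y = 0) ∧ f x ≠ 0 := by
  obtain ⟨f, hf⟩ := SeparatingDual.exists_ne_zero (R := 𝕂)
    (show p.mkQL x ≠ 0 by simpa [Submodule.Quotient.mk_eq_zero] using hx)
  exact ⟨f.comp p.mkQL, fun y hy => by simp [(Submodule.Quotient.mk_eq_zero p).2 hy], hf⟩

section InfSup

variable {𝕂 V W : Type*} [RCLike 𝕂] [NormedAddCommGroup V] [NormedSpace 𝕂 V]
  [NormedAddCommGroup W] [NormedSpace 𝕂 W]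

/-- Conjugation `f ↦ conj ∘ f` maps the dual onto the anti-dual, which transfers reflexivity. -/
theorem exists_eq_apply_of_surjective_inclusionInDoubleDual
    (hrefl : Function.Surjective (NormedSpace.inclusionInDoubleDual 𝕂 W))
    (ψ : (W →SL[starRingEnd 𝕂] 𝕂) →L[𝕂] 𝕂) : ∃ w : W, ∀ φ, ψ φ = φ w := by
  let conj : 𝕂 →SL[starRingEnd 𝕂] 𝕂 := (starL 𝕂 : 𝕂 ≃L⋆[𝕂] 𝕂)
  obtain ⟨w, hw⟩ := hrefl (conj.comp (ψ.comp (compSL W 𝕂 𝕂 (RingHom.id 𝕂) _ conj)))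
  refine ⟨w, fun φ => ?_⟩
  have hconj : conj.comp (conj.comp φ) = φ := by ext; simp [conj]
  simpa [conj, hconj] using (congrArg (starRingEnd 𝕂) (congrArg (· (conj.comp φ)) hw)).symm

theorem ContinuousLinearMap.isInvertible_of_infSup [CompleteSpace V]
    (hrefl : Function.Surjective (NormedSpace.inclusionInDoubleDual 𝕂 W))
    (A : V →L[𝕂] (W →SL[starRingEnd 𝕂] 𝕂)) {c : ℝ} (hc : 0 < c)
    (hinfsup : ∀ v, c * ‖v‖ ≤ ‖A v‖) (hnondeg : ∀ w : W, (∀ v, A v w = 0) → w = 0) :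
    A.IsInvertible := by
  obtain ⟨K, hK⟩ := antilipschitzWith_iff_exists_mul_le_norm.2 ⟨c, hc, hinfsup⟩
  have hsurj : Function.Surjective A := by
    intro φ
    by_contra hφ
    have : IsClosed (A.range : Set (W →SL[starRingEnd 𝕂] 𝕂)) := by
      rw [LinearMap.coe_range, coe_coe]
      exact hK.isClosed_range A.uniformContinuous
    obtain ⟨ψ, hψA, hψφ⟩ :=
      A.range.exists_strongDual_eq_zero_ne_zero_of_notMem (x := φ) (by simpa using hφ)
    obtain ⟨w, hw⟩ := exists_eq_apply_of_surjective_inclusionInDoubleDual hrefl ψ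
    have hw0 : w = 0 := hnondeg w fun v => by simpa [hw] using hψA (A v) ⟨v, rfl⟩
    exact hψφ (by simp [hw, hw0])
  exact ⟨.ofBijective A (LinearMap.ker_eq_bot.2 hK.injective) (LinearMap.range_eq_top.2 hsurj),
    rfl⟩

end InfSup

section Perturbation

variable {𝕜 V Y : Type*} [NontriviallyNormedField 𝕜] [NormedAddCommGroup V] [NormedSpace 𝕜 V]
  [NormedAddCommGroup Y] [NormedSpace 𝕜 Y]

theorem ContinuousLinearMap.IsInvertible.norm_inverse_apply_le {A : V →L[𝕜] Y}
    (hA : A.IsInvertible) {c : ℝ} (hc : 0 < c) (hinfsup : ∀ v, c * ‖v‖ ≤ ‖A v‖) (y : Y) :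
    ‖A.inverse y‖ ≤ 1 / c * ‖y‖ := by
  rw [one_div_mul_eq_div, le_div_iff₀ hc, mul_comm]
  simpa [hA] using hinfsup (A.inverse y)

theorem ContinuousLinearMap.IsInvertible.norm_apply_inverse_apply_le {Z : Type*}
    [NormedAddCommGroup Z] [NormedSpace 𝕜 Z] {A : V →L[𝕜] Y} (hA : A.IsInvertible) {c : ℝ}
    (hc : 0 < c) (hinfsup : ∀ v, c * ‖v‖ ≤ ‖A v‖) (T : V →L[𝕜] Z) (y : Y) :
    ‖T (A.inverse y)‖ ≤ 1 / c * ‖T‖ * ‖y‖ :=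
  calc ‖T (A.inverse y)‖ ≤ ‖T‖ * (1 / c * ‖y‖) :=
        (T.le_opNorm _).trans (by gcongr; exact hA.norm_inverse_apply_le hc hinfsup y)
    _ = 1 / c * ‖T‖ * ‖y‖ := by ring

theorem Continuous.clm_inverse [CompleteSpace V] {α : Type*} [TopologicalSpace α]
    {f : α → V →L[𝕜] Y} (hf : Continuous f) (hinv : ∀ a, (f a).IsInvertible) :
    Continuous fun a => (f a).inverse :=
  continuous_iff_continuousAt.2 fun a =>
    ((hinv a).contDiffAt_map_inverse (n := 0)).continuousAt.comp hf.continuousAt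

theorem ContinuousOn.ringInverse {R α : Type*} [NormedRing R] [HasSummableGeomSeries R]
    [TopologicalSpace α] {f : α → R} {s : Set α} (hf : ContinuousOn f s) :
    ContinuousOn (fun a => Ring.inverse (f a)) (s ∩ {a | IsUnit (f a)}) := fun a ha =>
  (ha.2.unit_spec ▸ NormedRing.inverse_continuousAt ha.2.unit).comp_continuousWithinAt
    (hf.mono inter_subset_left a ha)

theorem IsCompactOperator.isUnit_one_add [CompleteSpace V] {T : V →L[𝕜] V}
    (hT : IsCompactOperator T) (hinj : Function.Injective ⇑(1 + T)) : IsUnit (1 + T) := by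
  rcases hT.hasEigenvalue_or_mem_resolventSet (μ := -1) (by simp) with h | h
  · obtain ⟨x, hx⟩ := h.exists_hasEigenvector
    refine absurd (hinj (a₂ := 0) ?_) hx.2
    simpa [add_eq_zero_iff_eq_neg'] using hx.apply_eq_smul
  · rw [spectrum.mem_resolventSet_iff, ← IsUnit.neg_iff] at h
    simpa [add_comm] using h

variable {A K : V →L[𝕜] Y}

theorem ContinuousLinearMap.IsInvertible.apply_one_add_inverse_comp (hA : A.IsInvertible)
    (u : V) : A ((1 + A.inverse ∘L K) u) = A u + K u := by
  simp [hA]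

theorem ContinuousLinearMap.IsInvertible.isUnit_one_add_inverse_comp [CompleteSpace V]
    (hA : A.IsInvertible) (hK : IsCompactOperator K) (hinj : ∀ u, A u + K u = 0 → u = 0) :
    IsUnit (1 + A.inverse ∘L K) :=
  (hK.clm_comp A.inverse).isUnit_one_add <| (injective_iff_map_eq_zero _).2 fun u hu =>
    hinj u <| by rw [← hA.apply_one_add_inverse_comp, hu, map_zero]

theorem ContinuousLinearMap.IsInvertible.add_apply_eq_iff (hA : A.IsInvertible)
    (hB : IsUnit (1 + A.inverse ∘L K)) {u : V} {y : Y} :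
    A u + K u = y ↔ u = Ring.inverse (1 + A.inverse ∘L K) (A.inverse y) := by
  rw [← hA.apply_one_add_inverse_comp, eq_comm, ← hA.inverse_apply_eq]
  generalize A.inverse y = z
  constructor <;> rintro rfl
  · exact congr($(Ring.inverse_mul_cancel _ hB) u).symm
  · exact congr($(Ring.mul_inverse_cancel _ hB) z).symm

end Perturbation

theorem global_well_posedness_general
    {𝕂 V W H X E : Type*} [RCLike 𝕂] [TopologicalSpace E]
    [NormedAddCommGroup V] [NormedSpace 𝕂 V] [CompleteSpace V]
    [NormedAddCommGroup W] [NormedSpace 𝕂 W]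
    [NormedAddCommGroup H] [NormedSpace 𝕂 H]
    [NormedAddCommGroup X]
    (hrefl : Function.Surjective ⇑(NormedSpace.inclusionInDoubleDual 𝕂 W))
    (j : V →L[𝕂] H) (hjcompact : IsCompactOperator ⇑j)
    (U : Set X) (hUopen : IsOpen U)
    (𝔞₁ : E → (V →L[𝕂] (W →SL[starRingEnd 𝕂] 𝕂))) (h𝔞₁ : Continuous 𝔞₁)
    (𝔠 : E × X → (H →L[𝕂] (W →SL[starRingEnd 𝕂] 𝕂)))
    (h𝔠 : ContinuousOn 𝔠 (Set.univ ×ˢ U))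
    (c : E → ℝ) (hc : ∀ t, 0 < c t)
    (hinfsup : ∀ (t : E) (v : V), c t * ‖v‖ ≤ ‖𝔞₁ t v‖)
    (hnondeg : ∀ (t : E) (w : W), (∀ v : V, 𝔞₁ t v w = 0) → w = 0)
    (Ct : E → X → (H →L[𝕂] V))
    (hCt : ∀ (t : E), ∀ m ∈ U, ∀ (x : H) (w : W),
      𝔞₁ t ((Ct t m) x) w = 𝔠 (t, m) x w)
    (U' : Set X) (hU'U : U' ⊆ U)
    (hinj : ∀ (t : E), ∀ m ∈ U', ∀ u : V,
      (∀ w : W, 𝔞₁ t u w + 𝔠 (t, m) (j u) w = 0) → u = 0) :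
    ∃ 𝒰 : Set (E × X), IsOpen 𝒰 ∧ 𝒰 ⊆ Set.univ ×ˢ U ∧ Set.univ ×ˢ U' ⊆ 𝒰 ∧
      ∃ Binv : E × X → (V →L[𝕂] V),
        ContinuousOn Binv 𝒰 ∧
        (∀ p ∈ 𝒰, (∀ v : V, Binv p (v + Ct p.1 p.2 (j v)) = v) ∧
                   (∀ v : V, Binv p v + Ct p.1 p.2 (j (Binv p v)) = v)) ∧
        (∀ t : E, ∃ 𝒰t : Set X, IsOpen 𝒰t ∧ U' ⊆ 𝒰t ∧ 𝒰t ⊆ U ∧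
            ∀ m ∈ 𝒰t, Function.Bijective fun v : V => v + Ct t m (j v)) ∧
        ∃ sol : (E × X) × (W →SL[starRingEnd 𝕂] 𝕂) → V,
          ContinuousOn sol (𝒰 ×ˢ Set.univ) ∧
          ∀ p ∈ 𝒰, ∀ φ : W →SL[starRingEnd 𝕂] 𝕂,
            (∀ w : W, 𝔞₁ p.1 (sol (p, φ)) w + 𝔠 p (j (sol (p, φ))) w = φ w) ∧
            (∀ u : V, (∀ w : W, 𝔞₁ p.1 u w + 𝔠 p (j u) w = φ w) → u = sol (p, φ)) ∧
            ‖sol (p, φ)‖ ≤ (1 / c p.1) * ‖Binv p‖ * ‖φ‖ := by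
  have hA : ∀ t, (𝔞₁ t).IsInvertible := fun t =>
    (𝔞₁ t).isInvertible_of_infSup hrefl (hc t) (hinfsup t) (hnondeg t)
  let B : E × X → V →L[𝕂] V := fun p => 1 + (𝔞₁ p.1).inverse ∘L (𝔠 p ∘L j)
  have hB : ∀ p ∈ Set.univ ×ˢ U, ∀ v, B p v = v + Ct p.1 p.2 (j v) := by
    rintro ⟨t, m⟩ ⟨-, hm⟩ v
    change v + (𝔞₁ t).inverse (𝔠 (t, m) (j v)) = v + Ct t m (j v)
    rw [add_right_inj, (hA t).inverse_apply_eq]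
    ext w
    exact (hCt t m hm (j v) w).symm
  have hBcont : ContinuousOn B (Set.univ ×ˢ U) := continuousOn_const.add <|
    (((h𝔞₁.clm_inverse hA).comp continuous_fst).continuousOn.clm_comp h𝔠).clm_comp
      continuousOn_const
  have hBunit : ∀ p ∈ Set.univ ×ˢ U', IsUnit (B p) := fun p hp =>
    (hA p.1).isUnit_one_add_inverse_comp (hjcompact.clm_comp (𝔠 p)) fun u hu =>
      hinj p.1 p.2 hp.2 u fun w => congr($hu w)
  let 𝒰 := Set.univ ×ˢ U ∩ {p | IsUnit (B p)}
  have h𝒰 : IsOpen 𝒰 := hBcont.isOpen_inter_preimage (isOpen_univ.prod hUopen) Units.isOpen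
  have hsolve : ∀ p ∈ 𝒰, ∀ φ u, (∀ w, 𝔞₁ p.1 u w + 𝔠 p (j u) w = φ w) ↔
      u = Ring.inverse (B p) ((𝔞₁ p.1).inverse φ) := fun p hp φ u => by
    rw [← (hA p.1).add_apply_eq_iff hp.2, ContinuousLinearMap.ext_iff]
    rfl
  refine ⟨𝒰, h𝒰, inter_subset_left, fun p hp => ⟨⟨trivial, hU'U hp.2⟩, hBunit p hp⟩,
    fun p => Ring.inverse (B p), hBcont.ringInverse, fun p hp => ?_,
    fun t => ⟨Prod.mk t ⁻¹' 𝒰, h𝒰.preimage (Continuous.prodMk_right t),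
      fun m hm => ⟨⟨trivial, hU'U hm⟩, hBunit (t, m) ⟨trivial, hm⟩⟩, fun m hm => hm.1.2,
      fun m hm => by simpa only [← hB _ hm.1] using isUnit_iff_bijective.1 hm.2⟩,
    fun q => Ring.inverse (B q.1) ((𝔞₁ q.1.1).inverse q.2), ?_, fun p hp φ =>
      ⟨(hsolve p hp φ _).2 rfl, fun u hu => (hsolve p hp φ u).1 hu, ?_⟩⟩
  · simp only [← hB p hp.1]
    exact ⟨fun v => congr($(Ring.inverse_mul_cancel _ hp.2) v),
      fun v => congr($(Ring.mul_inverse_cancel _ hp.2) v)⟩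
  · exact (hBcont.ringInverse.comp continuousOn_fst fun q hq => hq.1).clm_apply
      (((h𝔞₁.clm_inverse hA).comp continuous_fst.fst).clm_apply continuous_snd).continuousOn
  · exact (hA p.1).norm_apply_inverse_apply_le (hc p.1) (hinfsup p.1) _ φ

/-- Theorem 4.1 (global version): under the injectivity condition on `E × U'` and
compactness of the embedding `j`, there is a set `𝒰` open in `E × X` containing
`E × U'` on which `I_V + C^V_{t,m}` is invertible with continuously varying inverse;
for each `t` there is an open `𝒰_t ⊆ X` with `U' ⊆ 𝒰_t ⊆ U` of invertibility;
and for all `(t,m) ∈ 𝒰` and `φ ∈ W*` the variational problem has a unique solution,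
depending continuously on `(t,m,φ)` and satisfying the stated norm bound. -/
theorem global_well_posedness
    {𝕂 V W H X E : Type*} [RCLike 𝕂] [TopologicalSpace E]
    [NormedAddCommGroup V] [NormedSpace 𝕂 V] [CompleteSpace V]
    [NormedAddCommGroup W] [NormedSpace 𝕂 W] [CompleteSpace W] [Nontrivial W]
    [NormedAddCommGroup H] [NormedSpace 𝕂 H] [CompleteSpace H]
    [NormedAddCommGroup X] [NormedSpace 𝕂 X] [CompleteSpace X]
    (hrefl : Function.Surjective ⇑(NormedSpace.inclusionInDoubleDual 𝕂 W))
    (j : V →L[𝕂] H) (hj : Function.Injective ⇑j) (hjcompact : IsCompactOperator ⇑j)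
    (U : Set X) (hUopen : IsOpen U) (hUne : U.Nonempty)
    (𝔞₁ : E → (V →L[𝕂] (W →SL[starRingEnd 𝕂] 𝕂))) (h𝔞₁ : Continuous 𝔞₁)
    (𝔠 : E × X → (H →L[𝕂] (W →SL[starRingEnd 𝕂] 𝕂)))
    (h𝔠 : ContinuousOn 𝔠 (Set.univ ×ˢ U))
    (c : E → ℝ) (hc : ∀ t, 0 < c t)
    (hinfsup : ∀ (t : E) (v : V), c t * ‖v‖ ≤ ‖𝔞₁ t v‖)
    (hnondeg : ∀ (t : E) (w : W), (∀ v : V, 𝔞₁ t v w = 0) → w = 0)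
    (Ct : E → X → (H →L[𝕂] V))
    (hCt : ∀ (t : E), ∀ m ∈ U, ∀ (x : H) (w : W),
      𝔞₁ t ((Ct t m) x) w = 𝔠 (t, m) x w)
    (U' : Set X) (hU'ne : U'.Nonempty) (hU'U : U' ⊆ U)
    (hinj : ∀ (t : E), ∀ m ∈ U', ∀ u : V,
      (∀ w : W, 𝔞₁ t u w + 𝔠 (t, m) (j u) w = 0) → u = 0) :
    ∃ 𝒰 : Set (E × X), IsOpen 𝒰 ∧ 𝒰 ⊆ Set.univ ×ˢ U ∧ Set.univ ×ˢ U' ⊆ 𝒰 ∧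
      ∃ Binv : E × X → (V →L[𝕂] V),
        ContinuousOn Binv 𝒰 ∧
        (∀ p ∈ 𝒰, (∀ v : V, Binv p (v + Ct p.1 p.2 (j v)) = v) ∧
                   (∀ v : V, Binv p v + Ct p.1 p.2 (j (Binv p v)) = v)) ∧
        (∀ t : E, ∃ 𝒰t : Set X, IsOpen 𝒰t ∧ U' ⊆ 𝒰t ∧ 𝒰t ⊆ U ∧
            ∀ m ∈ 𝒰t, Function.Bijective fun v : V => v + Ct t m (j v)) ∧
        ∃ sol : (E × X) × (W →SL[starRingEnd 𝕂] 𝕂) → V,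
          ContinuousOn sol (𝒰 ×ˢ Set.univ) ∧
          ∀ p ∈ 𝒰, ∀ φ : W →SL[starRingEnd 𝕂] 𝕂,
            (∀ w : W, 𝔞₁ p.1 (sol (p, φ)) w + 𝔠 p (j (sol (p, φ))) w = φ w) ∧
            (∀ u : V, (∀ w : W, 𝔞₁ p.1 u w + 𝔠 p (j u) w = φ w) → u = sol (p, φ)) ∧
            ‖sol (p, φ)‖ ≤ (1 / c p.1) * ‖Binv p‖ * ‖φ‖ :=
  global_well_posedness_general hrefl j hjcompact U hUopen 𝔞₁ h𝔞₁ 𝔠 h𝔠 c hc hinfsup hnondeg Ct hCt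
    U' hU'U hinj
end

section
/- Let a₁ be a bounded sesquilinear form on V × W with inf-sup constant c > 0 and nondegenerate in the second component, let 𝒢 ⊆ X be nonempty and open, let Φ : X → W* be a continuous affine map and let 𝔠 : 𝒢 → S(H × W, 𝕂) be the restriction of a continuous affine map X → S(H × W, 𝕂). Assume strong well-posedness for every m ∈ 𝒢 (for each φ ∈ W* there is exactly one u ∈ V with a₁(u,w) + 𝔠(m)(ju,w) = φ(w) for all w ∈ W) and let S : 𝒢 → V map m to the unique u ∈ V with a₁(u,w) + 𝔠(m)(ju,w) = Φ(m)(w) for all w ∈ W. Then S is continuously Fréchet differentiable on 𝒢 and for every m₀ ∈ 𝒢 and every κ ∈ (0,1) there exists ρ > 0 such that the closed ball B_ρ(m₀) is contained in 𝒢, the Fréchet derivative DS is bounded on B_ρ(m₀), and for all m₁, m₂ ∈ B_ρ(m₀): ‖j(S(m₁) − S(m₂) − DS(m₂)[m₁ − m₂])‖_H ≤ κ‖j(S(m₁) − S(m₂))‖_H and ‖S(m₁) − S(m₂) − DS(m₂)[m₁ − m₂]‖_V ≤ κ‖S(m₁) − S(m₂)‖_V (κ-tangential cone condition in both norms). -/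
/-!
Write `A m = a₁ + 𝔠 m ∘ j`; well-posedness and the inverse mapping theorem make `A m` invertible
on `𝒢`, so `S m = (A m)⁻¹ (Φ m)` there. With `L`, `B` the linear parts of `Φ`, `𝔠` we have
`A m₁ - A m₂ = B (m₁ - m₂) ∘ j`. Because everything is affine in `m`, linearising the state
equation at `m₂` with `S' m₂ h = (A m₂)⁻¹ (L h - B h (j (S m₂)))` leaves the exact remainder
`A m₂ (S m₁ - S m₂ - S' m₂ (m₁ - m₂)) = -B (m₁ - m₂) (j (S m₁ - S m₂))`,
so the linearisation error is at most `‖(A m₂)⁻¹‖ ‖B‖ ‖m₁ - m₂‖ ‖j (S m₁ - S m₂)‖`.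
Inversion is continuous, so `(A m)⁻¹` is locally bounded and `S` is continuous: the bound then
gives Fréchet differentiability, and on small balls it is at most `κ ‖j (S m₁ - S m₂)‖` and, via
`‖j‖`, at most `κ ‖S m₁ - S m₂‖`.
-/

open ContinuousLinearMap Filter Topology Metric

theorem ContinuousLinearMap.isInvertible_of_bijective {𝕂 E F : Type*} [NontriviallyNormedField 𝕂]
    [NormedAddCommGroup E] [NormedSpace 𝕂 E] [CompleteSpace E]
    [NormedAddCommGroup F] [NormedSpace 𝕂 F] [CompleteSpace F]
    {f : E →L[𝕂] F} (hf : Function.Bijective f) : f.IsInvertible :=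
  ⟨.ofBijective f (LinearMap.ker_eq_bot.mpr hf.1) (LinearMap.range_eq_top.mpr hf.2), rfl⟩

theorem ContinuousAt.clm_inverse {𝕂 E F X : Type*} [NontriviallyNormedField 𝕂]
    [NormedAddCommGroup E] [NormedSpace 𝕂 E] [CompleteSpace E]
    [NormedAddCommGroup F] [NormedSpace 𝕂 F] [TopologicalSpace X]
    {f : X → E →L[𝕂] F} {x : X} (hf : ContinuousAt f x) (hinv : (f x).IsInvertible) :
    ContinuousAt (fun y => (f y).inverse) x :=
  (hinv.contDiffAt_map_inverse (n := 0)).continuousAt.comp hf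

theorem Metric.exists_closedBall_subset_forall_mul_dist_le {X : Type*} [PseudoMetricSpace X]
    {U : Set X} {x₀ : X} (hU : U ∈ 𝓝 x₀) {g : X → ℝ} (hg : ContinuousAt g x₀)
    {κ : ℝ} (hκ : 0 < κ) :
    ∃ ρ > 0, closedBall x₀ ρ ⊆ U ∧
      ∀ x ∈ closedBall x₀ ρ, ∀ y ∈ closedBall x₀ ρ, g y * dist x y ≤ κ := by
  set C := |g x₀| + 1
  have hC : 0 < C := by positivity
  have hgC : ∀ᶠ y in 𝓝 x₀, g y < C := hg.eventually_lt_const (by grind [le_abs_self])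
  obtain ⟨r, hr, hrU⟩ := nhds_basis_closedBall.mem_iff.mp (inter_mem hU hgC)
  refine ⟨min r (κ / (2 * C)), by positivity, fun y hy => (hrU ?_).1, fun x hx y hy => ?_⟩
  · exact closedBall_subset_closedBall (min_le_left _ _) hy
  have hdist : dist x y ≤ κ / C := by
    calc dist x y ≤ dist x x₀ + dist y x₀ := dist_triangle_right x y x₀
      _ ≤ 2 * (κ / (2 * C)) := by
        linarith [mem_closedBall.mp hx, mem_closedBall.mp hy, min_le_right r (κ / (2 * C))]
      _ = κ / C := by field_simp
  have hgy : g y < C := (hrU (closedBall_subset_closedBall (min_le_left _ _) hy)).2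
  calc g y * dist x y ≤ C * dist x y := by gcongr
    _ ≤ C * (κ / C) := by gcongr
    _ = κ := by field_simp

section ParameterToState

variable {𝕂 V Y H X : Type*} [NontriviallyNormedField 𝕂]
  [NormedAddCommGroup V] [NormedSpace 𝕂 V]
  [NormedAddCommGroup Y] [NormedSpace 𝕂 Y]
  [NormedAddCommGroup H] [NormedSpace 𝕂 H]
  [NormedAddCommGroup X] [NormedSpace 𝕂 X]
  {A : X → V →L[𝕂] Y} {B : X →L[𝕂] H →L[𝕂] Y} {j : V →L[𝕂] H}
  {L : X →L[𝕂] Y} {b : Y} {S : X → V} {𝒢 : Set X}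

theorem continuous_of_sub_eq_comp (hA : ∀ m₁ m₂, A m₁ - A m₂ = (B (m₁ - m₂)).comp j) :
    Continuous A := by
  have hA0 : A = fun m => A 0 + (B m).comp j :=
    funext fun m => sub_eq_iff_eq_add'.mp (by simpa using hA m 0)
  rw [hA0]
  exact continuous_const.add (B.continuous.clm_comp continuous_const)

variable (A B j L S) in
/-- Obtained by differentiating the state equation `A m (S m) = L m + b` in `m`. -/
noncomputable def solutionDeriv (m : X) : X →L[𝕂] V :=
  (A m).inverse ∘L (L - B.flip (j (S m)))

theorem solution_eq_inverse_apply (hS : ∀ m ∈ 𝒢, A m (S m) = L m + b)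
    (hinv : ∀ m ∈ 𝒢, (A m).IsInvertible) {m : X} (hm : m ∈ 𝒢) :
    S m = (A m).inverse (L m + b) :=
  (((hinv m hm).inverse_apply_eq).mpr (hS m hm).symm).symm

theorem apply_sub_sub_solutionDeriv (hA : ∀ m₁ m₂, A m₁ - A m₂ = (B (m₁ - m₂)).comp j)
    (hS : ∀ m ∈ 𝒢, A m (S m) = L m + b) (hinv : ∀ m ∈ 𝒢, (A m).IsInvertible)
    {m₁ m₂ : X} (hm₁ : m₁ ∈ 𝒢) (hm₂ : m₂ ∈ 𝒢) :
    A m₂ (S m₁ - S m₂ - solutionDeriv A B j L S m₂ (m₁ - m₂)) =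
      -B (m₁ - m₂) (j (S m₁ - S m₂)) := by
  have h₁ : A m₂ (S m₁) = L m₁ + b - B (m₁ - m₂) (j (S m₁)) := by
    rw [← hS m₁ hm₁, ← comp_apply, ← hA, sub_apply, sub_sub_cancel]
  have h₂ : A m₂ (solutionDeriv A B j L S m₂ (m₁ - m₂)) =
      L (m₁ - m₂) - B (m₁ - m₂) (j (S m₂)) := by
    simp [solutionDeriv, (hinv m₂ hm₂).self_apply_inverse]
  rw [(A m₂).map_sub, (A m₂).map_sub, h₁, h₂, hS m₂ hm₂, map_sub j, (B (m₁ - m₂)).map_sub,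
    L.map_sub]
  abel

theorem norm_sub_sub_solutionDeriv_le (hA : ∀ m₁ m₂, A m₁ - A m₂ = (B (m₁ - m₂)).comp j)
    (hS : ∀ m ∈ 𝒢, A m (S m) = L m + b) (hinv : ∀ m ∈ 𝒢, (A m).IsInvertible)
    {m₁ m₂ : X} (hm₁ : m₁ ∈ 𝒢) (hm₂ : m₂ ∈ 𝒢) :
    ‖S m₁ - S m₂ - solutionDeriv A B j L S m₂ (m₁ - m₂)‖ ≤
      ‖(A m₂).inverse‖ * ‖B‖ * ‖m₁ - m₂‖ * ‖j (S m₁ - S m₂)‖ := by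
  set e := S m₁ - S m₂ - solutionDeriv A B j L S m₂ (m₁ - m₂)
  calc ‖e‖ = ‖(A m₂).inverse (A m₂ e)‖ := by rw [(hinv m₂ hm₂).inverse_apply_self]
    _ ≤ ‖(A m₂).inverse‖ * ‖B (m₁ - m₂) (j (S m₁ - S m₂))‖ := by
      rw [apply_sub_sub_solutionDeriv hA hS hinv hm₁ hm₂, ← norm_neg (B _ _), ← map_neg]
      exact le_opNorm _ _
    _ ≤ ‖(A m₂).inverse‖ * (‖B‖ * ‖m₁ - m₂‖ * ‖j (S m₁ - S m₂)‖) := by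
      gcongr
      exact le_opNorm₂ _ _ _
    _ = _ := by ring

theorem norm_sub_sub_solutionDeriv_le_mul_of_le (hA : ∀ m₁ m₂, A m₁ - A m₂ = (B (m₁ - m₂)).comp j)
    (hS : ∀ m ∈ 𝒢, A m (S m) = L m + b) (hinv : ∀ m ∈ 𝒢, (A m).IsInvertible)
    {m₁ m₂ : X} (hm₁ : m₁ ∈ 𝒢) (hm₂ : m₂ ∈ 𝒢) {κ : ℝ}
    (hκ : ‖j‖ * ‖(A m₂).inverse‖ * ‖B‖ * ‖m₁ - m₂‖ ≤ κ) :
    ‖j (S m₁ - S m₂ - solutionDeriv A B j L S m₂ (m₁ - m₂))‖ ≤ κ * ‖j (S m₁ - S m₂)‖ ∧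
      ‖S m₁ - S m₂ - solutionDeriv A B j L S m₂ (m₁ - m₂)‖ ≤ κ * ‖S m₁ - S m₂‖ := by
  have herr := norm_sub_sub_solutionDeriv_le hA hS hinv hm₁ hm₂
  constructor
  · calc _ ≤ ‖j‖ * ‖S m₁ - S m₂ - solutionDeriv A B j L S m₂ (m₁ - m₂)‖ := le_opNorm _ _
      _ ≤ ‖j‖ * (‖(A m₂).inverse‖ * ‖B‖ * ‖m₁ - m₂‖ * ‖j (S m₁ - S m₂)‖) := by gcongr
      _ = ‖j‖ * ‖(A m₂).inverse‖ * ‖B‖ * ‖m₁ - m₂‖ * ‖j (S m₁ - S m₂)‖ := by ring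
      _ ≤ κ * ‖j (S m₁ - S m₂)‖ := by gcongr
  · calc _ ≤ ‖(A m₂).inverse‖ * ‖B‖ * ‖m₁ - m₂‖ * ‖j (S m₁ - S m₂)‖ := herr
      _ ≤ ‖(A m₂).inverse‖ * ‖B‖ * ‖m₁ - m₂‖ * (‖j‖ * ‖S m₁ - S m₂‖) := by
        gcongr
        exact le_opNorm _ _
      _ = ‖j‖ * ‖(A m₂).inverse‖ * ‖B‖ * ‖m₁ - m₂‖ * ‖S m₁ - S m₂‖ := by ring
      _ ≤ κ * ‖S m₁ - S m₂‖ := by gcongr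

variable [CompleteSpace V]

theorem continuousAt_inverse_of_sub_eq_comp (hA : ∀ m₁ m₂, A m₁ - A m₂ = (B (m₁ - m₂)).comp j)
    {m : X} (hinv : (A m).IsInvertible) : ContinuousAt (fun m => (A m).inverse) m :=
  (continuous_of_sub_eq_comp hA).continuousAt.clm_inverse hinv

theorem continuousAt_solution (hA : ∀ m₁ m₂, A m₁ - A m₂ = (B (m₁ - m₂)).comp j)
    (h𝒢 : IsOpen 𝒢) (hS : ∀ m ∈ 𝒢, A m (S m) = L m + b) (hinv : ∀ m ∈ 𝒢, (A m).IsInvertible)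
    {m : X} (hm : m ∈ 𝒢) : ContinuousAt S m := by
  have hcont : ContinuousAt (fun m => (A m).inverse (L m + b)) m :=
    (continuousAt_inverse_of_sub_eq_comp hA (hinv m hm)).clm_apply
      (L.continuous.add continuous_const).continuousAt
  refine hcont.congr ?_
  filter_upwards [h𝒢.mem_nhds hm] with m' hm'
  exact (solution_eq_inverse_apply hS hinv hm').symm

theorem hasFDerivAt_solutionDeriv (hA : ∀ m₁ m₂, A m₁ - A m₂ = (B (m₁ - m₂)).comp j)
    (h𝒢 : IsOpen 𝒢) (hS : ∀ m ∈ 𝒢, A m (S m) = L m + b) (hinv : ∀ m ∈ 𝒢, (A m).IsInvertible)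
    {m : X} (hm : m ∈ 𝒢) : HasFDerivAt S (solutionDeriv A B j L S m) m := by
  have hsmall : Tendsto (fun m' => ‖(A m).inverse‖ * ‖B‖ * ‖j (S m' - S m)‖) (𝓝 m) (𝓝 0) := by
    have hj : Tendsto (fun m' => j (S m' - S m)) (𝓝 m) (𝓝 (j (S m - S m))) :=
      (j.continuous.tendsto _).comp
        ((continuousAt_solution hA h𝒢 hS hinv hm).sub continuousAt_const)
    simpa using (tendsto_const_nhds.mul hj.norm)
  rw [hasFDerivAt_iff_isLittleO, Asymptotics.isLittleO_iff]
  intro ε hε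
  filter_upwards [h𝒢.mem_nhds hm, hsmall.eventually (ge_mem_nhds hε)] with m' hm' hle
  calc _ ≤ ‖(A m).inverse‖ * ‖B‖ * ‖m' - m‖ * ‖j (S m' - S m)‖ :=
        norm_sub_sub_solutionDeriv_le hA hS hinv hm' hm
    _ = ‖(A m).inverse‖ * ‖B‖ * ‖j (S m' - S m)‖ * ‖m' - m‖ := by ring
    _ ≤ ε * ‖m' - m‖ := by gcongr

theorem continuousOn_solutionDeriv (hA : ∀ m₁ m₂, A m₁ - A m₂ = (B (m₁ - m₂)).comp j)
    (h𝒢 : IsOpen 𝒢) (hS : ∀ m ∈ 𝒢, A m (S m) = L m + b) (hinv : ∀ m ∈ 𝒢, (A m).IsInvertible) :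
    ContinuousOn (solutionDeriv A B j L S) 𝒢 := fun m hm =>
  have hjS := j.continuous.continuousAt.comp (continuousAt_solution hA h𝒢 hS hinv hm)
  ((continuousAt_inverse_of_sub_eq_comp hA (hinv m hm)).clm_comp
    (continuousAt_const.sub (B.flip.continuous.continuousAt.comp hjS))).continuousWithinAt

theorem exists_closedBall_tangentialCone (hA : ∀ m₁ m₂, A m₁ - A m₂ = (B (m₁ - m₂)).comp j)
    (h𝒢 : IsOpen 𝒢) (hS : ∀ m ∈ 𝒢, A m (S m) = L m + b) (hinv : ∀ m ∈ 𝒢, (A m).IsInvertible)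
    {m₀ : X} (hm₀ : m₀ ∈ 𝒢) {κ : ℝ} (hκ : 0 < κ) :
    ∃ ρ > (0 : ℝ), closedBall m₀ ρ ⊆ 𝒢 ∧
      (∃ K : ℝ, ∀ m ∈ closedBall m₀ ρ, ‖solutionDeriv A B j L S m‖ ≤ K) ∧
      ∀ m₁ ∈ closedBall m₀ ρ, ∀ m₂ ∈ closedBall m₀ ρ,
        ‖j (S m₁ - S m₂ - solutionDeriv A B j L S m₂ (m₁ - m₂))‖ ≤ κ * ‖j (S m₁ - S m₂)‖ ∧
        ‖S m₁ - S m₂ - solutionDeriv A B j L S m₂ (m₁ - m₂)‖ ≤ κ * ‖S m₁ - S m₂‖ := by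
  set S' := solutionDeriv A B j L S
  have hS' : ContinuousAt S' m₀ :=
    (continuousOn_solutionDeriv hA h𝒢 hS hinv).continuousAt (h𝒢.mem_nhds hm₀)
  have hU : 𝒢 ∩ {m | ‖S' m‖ < ‖S' m₀‖ + 1} ∈ 𝓝 m₀ :=
    inter_mem (h𝒢.mem_nhds hm₀) (hS'.norm.eventually_lt_const (lt_add_one _))
  have hg : ContinuousAt (fun m => ‖j‖ * ‖(A m).inverse‖ * ‖B‖) m₀ :=
    (continuousAt_const.mul (continuousAt_inverse_of_sub_eq_comp hA (hinv m₀ hm₀)).norm).mul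
      continuousAt_const
  obtain ⟨ρ, hρ, hsub, hsmall⟩ := exists_closedBall_subset_forall_mul_dist_le hU hg hκ
  refine ⟨ρ, hρ, fun m hm => (hsub hm).1, ⟨_, fun m hm => (hsub hm).2.le⟩,
    fun m₁ hm₁ m₂ hm₂ => ?_⟩
  refine norm_sub_sub_solutionDeriv_le_mul_of_le hA hS hinv (hsub hm₁).1 (hsub hm₂).1 ?_
  simpa only [dist_eq_norm] using hsmall m₁ hm₁ m₂ hm₂

end ParameterToState

theorem tangential_cone_condition_general
    {𝕂 V W H X : Type*} [RCLike 𝕂]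
    [NormedAddCommGroup V] [NormedSpace 𝕂 V] [CompleteSpace V]
    [NormedAddCommGroup W] [NormedSpace 𝕂 W]
    [NormedAddCommGroup H] [NormedSpace 𝕂 H]
    [NormedAddCommGroup X] [NormedSpace 𝕂 X]
    (j : V →L[𝕂] H)
    (a₁ : V →L[𝕂] (W →SL[starRingEnd 𝕂] 𝕂))
    (𝒢 : Set X) (h𝒢open : IsOpen 𝒢)
    (Φ : X → (W →SL[starRingEnd 𝕂] 𝕂))
    (hΦaff : ∃ (L : X →L[𝕂] (W →SL[starRingEnd 𝕂] 𝕂)) (b : W →SL[starRingEnd 𝕂] 𝕂),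
      ∀ m : X, Φ m = L m + b)
    (𝔠 : X → (H →L[𝕂] (W →SL[starRingEnd 𝕂] 𝕂)))
    (h𝔠aff : ∃ (L : X →L[𝕂] (H →L[𝕂] (W →SL[starRingEnd 𝕂] 𝕂)))
        (b : H →L[𝕂] (W →SL[starRingEnd 𝕂] 𝕂)),
      ∀ m : X, 𝔠 m = L m + b)
    (hwp : ∀ m ∈ 𝒢, ∀ φ : W →SL[starRingEnd 𝕂] 𝕂,
      ∃! u : V, ∀ w : W, a₁ u w + 𝔠 m (j u) w = φ w)
    (S : X → V)
    (hS : ∀ m ∈ 𝒢, ∀ w : W, a₁ (S m) w + 𝔠 m (j (S m)) w = Φ m w) :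
    ∃ S' : X → (X →L[𝕂] V),
      (∀ m ∈ 𝒢, HasFDerivAt S (S' m) m) ∧
      ContinuousOn S' 𝒢 ∧
      ∀ m₀ ∈ 𝒢, ∀ κ : ℝ, κ ∈ Set.Ioo (0 : ℝ) 1 →
        ∃ ρ > (0 : ℝ), Metric.closedBall m₀ ρ ⊆ 𝒢 ∧
          (∃ K : ℝ, ∀ m ∈ Metric.closedBall m₀ ρ, ‖S' m‖ ≤ K) ∧
          ∀ m₁ ∈ Metric.closedBall m₀ ρ, ∀ m₂ ∈ Metric.closedBall m₀ ρ,
            ‖j (S m₁ - S m₂ - S' m₂ (m₁ - m₂))‖ ≤ κ * ‖j (S m₁ - S m₂)‖ ∧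
            ‖S m₁ - S m₂ - S' m₂ (m₁ - m₂)‖ ≤ κ * ‖S m₁ - S m₂‖ := by
  obtain ⟨LΦ, bΦ, hΦ⟩ := hΦaff
  obtain ⟨Lc, bc, h𝔠⟩ := h𝔠aff
  set A : X → V →L[𝕂] (W →SL[starRingEnd 𝕂] 𝕂) := fun m => a₁ + (𝔠 m).comp j
  have hA : ∀ m₁ m₂, A m₁ - A m₂ = (Lc (m₁ - m₂)).comp j := by
    intro m₁ m₂
    ext v w
    simp [A, h𝔠]
  have hAS : ∀ m ∈ 𝒢, A m (S m) = LΦ m + bΦ := fun m hm => by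
    ext w
    simpa [A, hΦ] using hS m hm w
  have hinv : ∀ m ∈ 𝒢, (A m).IsInvertible := fun m hm =>
    isInvertible_of_bijective <| Function.bijective_iff_existsUnique _ |>.mpr fun φ => by
      simpa [A, ContinuousLinearMap.ext_iff] using hwp m hm φ
  exact ⟨solutionDeriv A Lc j LΦ S, fun m hm => hasFDerivAt_solutionDeriv hA h𝒢open hAS hinv hm,
    continuousOn_solutionDeriv hA h𝒢open hAS hinv,
    fun m₀ hm₀ κ hκ => exists_closedBall_tangentialCone hA h𝒢open hAS hinv hm₀ hκ.1⟩

/-- Theorem 5.3: if `Φ` is continuous affine and `𝔠` is (the restriction of) a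
continuous affine map, and the problem is strongly well-posed on the open set `𝒢`,
then the parameter-to-state operator `S` is continuously Fréchet differentiable on
`𝒢` and satisfies, locally around every `m₀ ∈ 𝒢` and for every `κ ∈ (0,1)`, the
`κ`-tangential cone condition with respect to both `‖·‖_H` and `‖·‖_V`. -/
theorem tangential_cone_condition
    {𝕂 V W H X : Type*} [RCLike 𝕂]
    [NormedAddCommGroup V] [NormedSpace 𝕂 V] [CompleteSpace V]
    [NormedAddCommGroup W] [NormedSpace 𝕂 W] [CompleteSpace W] [Nontrivial W]
    [NormedAddCommGroup H] [NormedSpace 𝕂 H] [CompleteSpace H]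
    [NormedAddCommGroup X] [NormedSpace 𝕂 X] [CompleteSpace X]
    (hrefl : Function.Surjective ⇑(NormedSpace.inclusionInDoubleDual 𝕂 W))
    (j : V →L[𝕂] H) (hj : Function.Injective ⇑j)
    (a₁ : V →L[𝕂] (W →SL[starRingEnd 𝕂] 𝕂))
    (c : ℝ) (hc : 0 < c)
    (hinfsup : ∀ v : V, c * ‖v‖ ≤ ‖a₁ v‖)
    (hnondeg : ∀ w : W, (∀ v : V, a₁ v w = 0) → w = 0)
    (𝒢 : Set X) (h𝒢open : IsOpen 𝒢) (h𝒢ne : 𝒢.Nonempty)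
    (Φ : X → (W →SL[starRingEnd 𝕂] 𝕂))
    (hΦaff : ∃ (L : X →L[𝕂] (W →SL[starRingEnd 𝕂] 𝕂)) (b : W →SL[starRingEnd 𝕂] 𝕂),
      ∀ m : X, Φ m = L m + b)
    (𝔠 : X → (H →L[𝕂] (W →SL[starRingEnd 𝕂] 𝕂)))
    (h𝔠aff : ∃ (L : X →L[𝕂] (H →L[𝕂] (W →SL[starRingEnd 𝕂] 𝕂)))
        (b : H →L[𝕂] (W →SL[starRingEnd 𝕂] 𝕂)),
      ∀ m : X, 𝔠 m = L m + b)
    (hwp : ∀ m ∈ 𝒢, ∀ φ : W →SL[starRingEnd 𝕂] 𝕂,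
      ∃! u : V, ∀ w : W, a₁ u w + 𝔠 m (j u) w = φ w)
    (S : X → V)
    (hS : ∀ m ∈ 𝒢, ∀ w : W, a₁ (S m) w + 𝔠 m (j (S m)) w = Φ m w) :
    ∃ S' : X → (X →L[𝕂] V),
      (∀ m ∈ 𝒢, HasFDerivAt S (S' m) m) ∧
      ContinuousOn S' 𝒢 ∧
      ∀ m₀ ∈ 𝒢, ∀ κ : ℝ, κ ∈ Set.Ioo (0 : ℝ) 1 →
        ∃ ρ > (0 : ℝ), Metric.closedBall m₀ ρ ⊆ 𝒢 ∧
          (∃ K : ℝ, ∀ m ∈ Metric.closedBall m₀ ρ, ‖S' m‖ ≤ K) ∧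
          ∀ m₁ ∈ Metric.closedBall m₀ ρ, ∀ m₂ ∈ Metric.closedBall m₀ ρ,
            ‖j (S m₁ - S m₂ - S' m₂ (m₁ - m₂))‖ ≤ κ * ‖j (S m₁ - S m₂)‖ ∧
            ‖S m₁ - S m₂ - S' m₂ (m₁ - m₂)‖ ≤ κ * ‖S m₁ - S m₂‖ :=
  tangential_cone_condition_general j a₁ 𝒢 h𝒢open Φ hΦaff 𝔠 h𝔠aff hwp S hS
end
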